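/- In λexc, if a value v reaches a continuation stack of the form K'[try K[throw ex []] catch ex with h. e] where K contains no handler for ex, then the machine deterministically transitions to evaluating e[v/h] under K', discarding all frames of K; consequently the unwinding of the handler stack is well-defined: the decomposition of the stack into (outer context, nearest matching handler, inner context with no matching handler) is unique. -/
import Mathlib


namespace Exc

/-- Exception names. -/
abbrev Exn := Nat

mutual
inductive Expr : Type where
  | val (v : Val)
  | var (x : String)
  | app (e1 e2 : Expr)
  | throwE (ex : Exn) (e : Expr)
  | tryc (ex : Exn) (e1 : Expr) (h : String) (e2 : Expr)
inductive Val : Type where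
  | recfun (f x : String) (e : Expr)
end

/-- Continuation stacks (evaluation contexts), with the innermost frame
as the outermost constructor.  `argF K e` is `K[e ∅]`, `funF K v` is
`K[∅ v]`-style application frames, `tryF K ex h e` is a handler frame
`K[try ∅ catch ex with h. e]`, and `throwF K ex` is `K[throw ex ∅]`. -/
inductive Ectx : Type where
  | hole
  | argF (K : Ectx) (e : Expr)
  | funF (K : Ectx) (v : Val)
  | tryF (K : Ectx) (ex : Exn) (h : String) (e : Expr)
  | throwF (K : Ectx) (ex : Exn)

/-- `ecomp K1 K2` places the frames of `K2` inside `K1`. -/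
def ecomp (K1 : Ectx) : Ectx → Ectx
  | .hole => K1
  | .argF K e => .argF (ecomp K1 K) e
  | .funF K v => .funF (ecomp K1 K) v
  | .tryF K ex h e => .tryF (ecomp K1 K) ex h e
  | .throwF K ex => .throwF (ecomp K1 K) ex

/-- `K` contains no handler frame for exception `ex`. -/
def noHandler (ex : Exn) : Ectx → Prop
  | .hole => True
  | .argF K _ => noHandler ex K
  | .funF K _ => noHandler ex K
  | .tryF K ex' _ _ => ex' ≠ ex ∧ noHandler ex K
  | .throwF K _ => noHandler ex K

mutual
def substE (x : String) (w : Val) : Expr → Expr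
  | .val v => .val (substV x w v)
  | .var y => if y = x then .val w else .var y
  | .app e1 e2 => .app (substE x w e1) (substE x w e2)
  | .throwE ex e => .throwE ex (substE x w e)
  | .tryc ex e1 h e2 =>
      .tryc ex (substE x w e1) h (if h = x then e2 else substE x w e2)
def substV (x : String) (w : Val) : Val → Val
  | .recfun f y e =>
      if f = x ∨ y = x then .recfun f y e else .recfun f y (substE x w e)
end

/-- Abstract machine configurations. -/
inductive Config : Type where
  | term (e : Expr)
  | eval (e : Expr) (K : Ectx)
  | cont (K : Ectx) (v : Val)
  | ret (v : Val)

/-- CEK-machine transitions for λexc. -/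
inductive MStep : Config → Config → Prop where
  | start (e : Expr) : MStep (.term e) (.eval e .hole)
  | retv (v : Val) : MStep (.cont .hole v) (.ret v)
  | evalVal (v : Val) (K : Ectx) : MStep (.eval (.val v) K) (.cont K v)
  | evalApp (e0 e1 : Expr) (K : Ectx) :
      MStep (.eval (.app e0 e1) K) (.eval e1 (.argF K e0))
  | evalTry (ex : Exn) (e1 : Expr) (h : String) (e2 : Expr) (K : Ectx) :
      MStep (.eval (.tryc ex e1 h e2) K) (.eval e1 (.tryF K ex h e2))
  | evalThrow (ex : Exn) (e : Expr) (K : Ectx) :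
      MStep (.eval (.throwE ex e) K) (.eval e (.throwF K ex))
  | contArg (K : Ectx) (e0 : Expr) (v : Val) :
      MStep (.cont (.argF K e0) v) (.eval e0 (.funF K v))
  | contBeta (K : Ectx) (f x : String) (e : Expr) (v : Val) :
      MStep (.cont (.funF K v) (.recfun f x e))
            (.eval (substE x v (substE f (.recfun f x e) e)) K)
  | contTry (K : Ectx) (ex : Exn) (h : String) (e2 : Expr) (v : Val) :
      MStep (.cont (.tryF K ex h e2) v) (.eval (.val v) K)
  | contThrowHandle (K' : Ectx) (ex : Exn) (h : String) (e2 : Expr)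
      (K : Ectx) (v : Val) (hK : noHandler ex K) :
      MStep (.cont (.throwF (ecomp (.tryF K' ex h e2) K) ex) v)
            (.eval (substE h v e2) K')

end Exc

theorem exc_unique_decomp (ex : Exc.Exn) :
    ∀ (K : Exc.Ectx) (K' : Exc.Ectx) (h : String) (e : Exc.Expr)
      (K2 : Exc.Ectx) (K'2 : Exc.Ectx) (h2 : String) (e2 : Exc.Expr),
      Exc.noHandler ex K → Exc.noHandler ex K2 →
      Exc.ecomp (.tryF K' ex h e) K = Exc.ecomp (.tryF K'2 ex h2 e2) K2 →
      K' = K'2 ∧ h = h2 ∧ e = e2 ∧ K = K2 := by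
  intro K
  induction K with
  | hole =>
    intro K' h e K2 K'2 h2 e2 _ hn2 heq
    cases K2 with
    | hole => simp [Exc.ecomp] at heq; tauto
    | argF K2 e' => simp [Exc.ecomp] at heq
    | funF K2 v' => simp [Exc.ecomp] at heq
    | throwF K2 ex' => simp [Exc.ecomp] at heq
    | tryF K2 ex' h' e' =>
      simp [Exc.ecomp] at heq
      exact absurd heq.2.1.symm hn2.1
  | argF K e0 ih =>
    intro K' h e K2 K'2 h2 e2 hn hn2 heq
    cases K2 with
    | argF K2 e' =>
      simp [Exc.ecomp] at heq
      obtain ⟨h1, h2'⟩ := heq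
      obtain ⟨a, b, c, d⟩ := ih K' h e K2 K'2 h2 e2 hn hn2 h1
      subst h2'; simp_all
    | hole => simp [Exc.ecomp] at heq
    | funF K2 v' => simp [Exc.ecomp] at heq
    | throwF K2 ex' => simp [Exc.ecomp] at heq
    | tryF K2 ex' h' e' => simp [Exc.ecomp] at heq
  | funF K v0 ih =>
    intro K' h e K2 K'2 h2 e2 hn hn2 heq
    cases K2 with
    | funF K2 v' =>
      simp [Exc.ecomp] at heq
      obtain ⟨h1, h2'⟩ := heq
      obtain ⟨a, b, c, d⟩ := ih K' h e K2 K'2 h2 e2 hn hn2 h1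
      subst h2'; simp_all
    | hole => simp [Exc.ecomp] at heq
    | argF K2 e' => simp [Exc.ecomp] at heq
    | throwF K2 ex' => simp [Exc.ecomp] at heq
    | tryF K2 ex' h' e' => simp [Exc.ecomp] at heq
  | tryF K ex' h' e' ih =>
    intro K' h e K2 K'2 h2 e2 hn hn2 heq
    cases K2 with
    | tryF K2 ex'' h'' e'' =>
      simp [Exc.ecomp] at heq
      obtain ⟨h1, h2', h3, h4⟩ := heq
      obtain ⟨a, b, c, d⟩ := ih K' h e K2 K'2 h2 e2 hn.2 hn2.2 h1
      subst h2' h3 h4; simp_all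
    | hole =>
      simp [Exc.ecomp] at heq
      exact absurd heq.2.1 hn.1
    | argF K2 e'' => simp [Exc.ecomp] at heq
    | funF K2 v'' => simp [Exc.ecomp] at heq
    | throwF K2 ex'' => simp [Exc.ecomp] at heq
  | throwF K ex0 ih =>
    intro K' h e K2 K'2 h2 e2 hn hn2 heq
    cases K2 with
    | throwF K2 ex'' =>
      simp [Exc.ecomp] at heq
      obtain ⟨h1, h2'⟩ := heq
      obtain ⟨a, b, c, d⟩ := ih K' h e K2 K'2 h2 e2 hn hn2 h1
      subst h2'; simp_all
    | hole => simp [Exc.ecomp] at heq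
    | argF K2 e'' => simp [Exc.ecomp] at heq
    | funF K2 v'' => simp [Exc.ecomp] at heq
    | tryF K2 ex'' h'' e'' => simp [Exc.ecomp] at heq

/-- when a value `v` reaches a stack of the form
`K'[try K[throw ex ∅] catch ex with h. e]` where `K` contains no handler
for `ex`, the machine deterministically transitions to evaluating
`e[v/h]` under `K'`, discarding `K`; moreover the decomposition of the
stack into (outer context, nearest matching handler, handler-free inner
context) is unique. -/
theorem exc_unwind_deterministic (K' : Exc.Ectx) (ex : Exc.Exn)
    (h : String) (e : Exc.Expr) (K : Exc.Ectx) (v : Exc.Val)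
    (hnh : Exc.noHandler ex K) :
    (∀ c' : Exc.Config,
      Exc.MStep
        (.cont (.throwF (Exc.ecomp (.tryF K' ex h e) K) ex) v) c' ↔
        c' = .eval (Exc.substE h v e) K') ∧
    (∀ (K'2 : Exc.Ectx) (h2 : String) (e2 : Exc.Expr) (K2 : Exc.Ectx),
      Exc.noHandler ex K2 →
      Exc.Ectx.throwF (Exc.ecomp (.tryF K' ex h e) K) ex =
        Exc.Ectx.throwF (Exc.ecomp (.tryF K'2 ex h2 e2) K2) ex →
      K' = K'2 ∧ h = h2 ∧ e = e2 ∧ K = K2) := by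
  constructor
  · intro c'
    constructor
    · intro hstep
      generalize hA : Exc.ecomp (.tryF K' ex h e) K = A at hstep
      cases hstep with
      | contThrowHandle K'2 _ h2 e2 K2 _ hK2 =>
        obtain ⟨a, b, c, d⟩ :=
          exc_unique_decomp ex K K' h e K2 K'2 h2 e2 hnh hK2 hA
        subst a b c d; rfl
    · rintro rfl
      exact Exc.MStep.contThrowHandle K' ex h e K v hnh
  · intro K'2 h2 e2 K2 hn2 heq
    injection heq with heq
    exact exc_unique_decomp ex K K' h e K2 K'2 h2 e2 hnh hn2 heq
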